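/- (Storage function theorem.) Fix d ∈ (−1,1), β > 0, α₁, α₂, ã, L > 0 and suppose that ã·(α₁·μ(z₁,z₂) − (α₂/α₁)·η(z₁,z₂)) > α₁²·z₂² for every (z₁,z₂) ∈ ℝ²∖{(0,0)}. Then there exists γ* ≥ 0 such that for every γ ≥ γ* and every (z₁,z₂,ν,δ) ∈ ℝ⁴∖{(0,0,0,0)} the homogeneous differential dissipation inequality Ĵ(z₁,z₂,ν,δ; γ, L) < 0 holds. (Hence the scaled Lyapunov function V = ã·L·V_l is a storage function for the error dynamics with respect to the homogeneous L₂ supply rate with gain γ.) -/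
import Mathlib
set_option maxHeartbeats 1000000

/-- Sign-preserving power `⌊x⌉^p = sign(x)·|x|^p`. -/
noncomputable def spow (x p : ℝ) : ℝ := Real.sign x * |x| ^ p

/-- The value function `Ĵ(z₁,z₂,ν,δ; γ, L)` of the homogeneous differential
dissipation inequality for the second-order homogeneous differentiator. -/
noncomputable def Jhat (d β α1 α2 a L γ z1 z2 ν δ : ℝ) : ℝ :=
  a * (-α1 * (spow z1 (1/(1-d)) - z2) * (spow (z1 + ν) (1/(1-d)) - z2)
        + (-z1 + (1 + β) * spow z2 (1 - d)) *
            (-(α2 / α1) * spow (z1 + ν) ((1+d)/(1-d)) + δ / (L ^ 2 * α1)))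
    + α1 ^ 2 * z2 ^ 2 - (γ / L) ^ 2 * (|ν| ^ (2/(1-d)) + |δ| ^ (2/(1+d)))

/-- `mu(z) = |spow z1 (1/(1-d)) - z2|^2`. -/
noncomputable def muF (d z1 z2 : ℝ) : ℝ := |spow z1 (1/(1-d)) - z2| ^ (2:ℝ)

/-- `eta(z) = (1+b)(z1 - spow z2 (1-d)) spow z1 ((1+d)/(1-d)) - b|z1|^{2/(1-d)}`. -/
noncomputable def etaF (d β z1 z2 : ℝ) : ℝ :=
  (1 + β) * (z1 - spow z2 (1 - d)) * spow z1 ((1+d)/(1-d)) - β * |z1| ^ (2/(1-d))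

section Aux

lemma continuous_abs_rpow {p : ℝ} (hp : 0 < p) : Continuous fun x : ℝ => |x| ^ p :=
  continuous_abs.rpow_const fun _ => Or.inr hp.le

lemma abs_sign_le (y : ℝ) : |Real.sign y| ≤ 1 := by
  rcases lt_trichotomy y 0 with h|rfl|h
  · simp [Real.sign_of_neg h]
  · simp
  · simp [Real.sign_of_pos h]

lemma continuous_spow {p : ℝ} (hp : 0 < p) : Continuous fun x : ℝ => spow x p := by
  rw [continuous_iff_continuousAt]
  intro x
  rcases lt_trichotomy x 0 with hx | rfl | hx
  · have h : (fun y : ℝ => -(|y| ^ p)) =ᶠ[nhds x] fun y => spow y p := by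
      filter_upwards [Iio_mem_nhds hx] with y hy
      simp [spow, Real.sign_of_neg hy]
    exact ContinuousAt.congr ((continuous_abs_rpow hp).neg.continuousAt) h
  · have h0 : spow 0 p = 0 := by simp [spow]
    rw [ContinuousAt, h0]
    refine squeeze_zero_norm (a := fun y : ℝ => |y| ^ p) ?_ ?_
    · intro y
      have h1 := abs_sign_le y
      have h2 : (0:ℝ) ≤ |y| ^ p := Real.rpow_nonneg (abs_nonneg y) p
      calc ‖spow y p‖ = |Real.sign y| * (|y| ^ p) := by
              rw [Real.norm_eq_abs, spow, abs_mul, abs_of_nonneg h2]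
        _ ≤ 1 * (|y| ^ p) := by nlinarith
        _ = |y| ^ p := one_mul _
    · have := (continuous_abs_rpow hp).tendsto 0
      simpa [Real.zero_rpow hp.ne'] using this
  · have h : (fun y : ℝ => |y| ^ p) =ᶠ[nhds x] fun y => spow y p := by
      filter_upwards [Ioi_mem_nhds hx] with y hy
      simp [spow, Real.sign_of_pos hy]
    exact ContinuousAt.congr ((continuous_abs_rpow hp).continuousAt) h

lemma spow_mul {c : ℝ} (hc : 0 < c) (x p : ℝ) : spow (c * x) p = c ^ p * spow x p := by
  unfold spow
  have hs : Real.sign (c * x) = Real.sign x := by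
    rcases lt_trichotomy x 0 with h|rfl|h
    · rw [Real.sign_of_neg h, Real.sign_of_neg (mul_neg_of_pos_of_neg hc h)]
    · simp
    · rw [Real.sign_of_pos h, Real.sign_of_pos (mul_pos hc h)]
  rw [hs, abs_mul, abs_of_pos hc, Real.mul_rpow hc.le (abs_nonneg x)]
  ring

lemma spow_rpow_scale {c : ℝ} (hc : 0 < c) (r p x : ℝ) :
    spow (c ^ r * x) p = c ^ (r * p) * spow x p := by
  rw [spow_mul (Real.rpow_pos_of_pos hc r), ← Real.rpow_mul hc.le]

lemma abs_rpow_scale {c : ℝ} (hc : 0 < c) (r p x : ℝ) :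
    |c ^ r * x| ^ p = c ^ (r * p) * |x| ^ p := by
  rw [abs_mul, abs_of_pos (Real.rpow_pos_of_pos hc r),
    Real.mul_rpow (Real.rpow_pos_of_pos hc r).le (abs_nonneg x), ← Real.rpow_mul hc.le]

lemma rpow_two_eq {c : ℝ} (hc : 0 ≤ c) : c ^ (2:ℝ) = c ^ 2 := by
  rw [show (2:ℝ) = ((2:ℕ):ℝ) by norm_num, Real.rpow_natCast]

lemma mul_sign_self_eq_abs (x : ℝ) : x * Real.sign x = |x| := by
  rcases lt_trichotomy x 0 with h|rfl|h
  · rw [Real.sign_of_neg h, abs_of_neg h]; ring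
  · simp
  · rw [Real.sign_of_pos h, abs_of_pos h]; ring

lemma Jhat_homog (d β α1 α2 a L γ : ℝ) (hd1 : -1 < d) (hd2 : d < 1) {c : ℝ} (hc : 0 < c)
    (z1 z2 ν δ : ℝ) :
    Jhat d β α1 α2 a L γ (c^(1-d)*z1) (c*z2) (c^(1-d)*ν) (c^(1+d)*δ)
      = c^2 * Jhat d β α1 α2 a L γ z1 z2 ν δ := by
  have h1 : (1:ℝ) - d ≠ 0 := by linarith
  have h2 : (1:ℝ) + d ≠ 0 := by linarith
  have e1 : (1-d) * (1/(1-d)) = 1 := by field_simp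
  have e2 : (1-d) * ((1+d)/(1-d)) = 1+d := by field_simp
  have e3 : (1-d) * (2/(1-d)) = 2 := by field_simp
  have e4 : (1+d) * (2/(1+d)) = 2 := by field_simp
  have hz : c^(1-d)*z1 + c^(1-d)*ν = c^(1-d)*(z1+ν) := by ring
  unfold Jhat
  rw [hz, spow_rpow_scale hc, spow_rpow_scale hc, spow_mul hc, spow_rpow_scale hc,
    abs_rpow_scale hc, abs_rpow_scale hc, e1, e2, e3, e4, Real.rpow_one,
    rpow_two_eq hc.le]
  have key : c^(1-d) * c^(1+d) = c^2 := by
    rw [← Real.rpow_add hc, show (1-d)+(1+d) = (2:ℝ) by ring, rpow_two_eq hc.le]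
  linear_combination (a * (-z1 + (1+β)*spow z2 (1-d)) *
    (-(α2/α1)*spow (z1+ν) ((1+d)/(1-d)) + δ/(L^2*α1))) * key

lemma Jhat_zero (d β α1 α2 a L z1 z2 : ℝ) (hd1 : -1 < d) (hd2 : d < 1) :
    Jhat d β α1 α2 a L 0 z1 z2 0 0
      = α1^2*z2^2 - a*(α1*muF d z1 z2 - (α2/α1)*etaF d β z1 z2) := by
  have h1d : (0:ℝ) < 1 - d := by linarith
  have h1pd : (0:ℝ) < 1 + d := by linarith
  have h1 : (1:ℝ) - d ≠ 0 := by linarith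
  have hp3 : (0:ℝ) < 2/(1-d) := by positivity
  have habs : |z1| ^ (2/(1-d)) = z1 * spow z1 ((1+d)/(1-d)) := by
    rcases eq_or_ne z1 0 with rfl|hz
    · simp [Real.zero_rpow hp3.ne']
    · have he : 2/(1-d) = 1 + (1+d)/(1-d) := by field_simp; ring
      rw [he, Real.rpow_add (abs_pos.2 hz), Real.rpow_one, spow]
      rw [show z1 * (Real.sign z1 * |z1| ^ ((1+d)/(1-d)))
            = (z1 * Real.sign z1) * |z1| ^ ((1+d)/(1-d)) by ring, mul_sign_self_eq_abs]
  have hmu : muF d z1 z2 = (spow z1 (1/(1-d)) - z2)^2 := by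
    unfold muF; rw [rpow_two_eq (abs_nonneg _), sq_abs]
  unfold Jhat etaF
  rw [hmu, habs]
  simp only [add_zero, abs_zero, Real.zero_rpow hp3.ne',
    Real.zero_rpow (by positivity : (2/(1+d)) ≠ 0)]
  ring

lemma Jhat_split (d β α1 α2 a L γ z1 z2 ν δ : ℝ) :
    Jhat d β α1 α2 a L γ z1 z2 ν δ
      = Jhat d β α1 α2 a L 0 z1 z2 ν δ
        - (γ/L)^2 * (|ν| ^ (2/(1-d)) + |δ| ^ (2/(1+d))) := by
  unfold Jhat; ring

/-- From `|t|^p ≤ 1` with `0 < p`, conclude `|t| ≤ 1`. -/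
lemma abs_le_one_of_rpow_le_one {t p : ℝ} (hp : 0 < p) (h : |t| ^ p ≤ 1) : |t| ≤ 1 := by
  by_contra hcon
  push_neg at hcon
  have h1 : (1:ℝ) ^ p < |t| ^ p := Real.rpow_lt_rpow (by norm_num) hcon hp
  rw [Real.one_rpow] at h1
  linarith

end Aux

/-- Storage function theorem: under the domination condition on `a`, there is
`gammaStar >= 0` such that for all `gamma >= gammaStar` the homogeneous differential
dissipation inequality `Jhat < 0` holds away from the origin. -/
theorem stmt11 (d β α1 α2 a L : ℝ) (hd : d ∈ Set.Ioo (-1:ℝ) 1) (hβ : 0 < β)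
    (hα1 : 0 < α1) (hα2 : 0 < α2) (ha : 0 < a) (hL : 0 < L)
    (hSF : ∀ z1 z2 : ℝ, (z1, z2) ≠ ((0:ℝ), (0:ℝ)) →
      α1 ^ 2 * z2 ^ 2 < a * (α1 * muF d z1 z2 - (α2 / α1) * etaF d β z1 z2)) :
    ∃ γs : ℝ, 0 ≤ γs ∧ ∀ γ ≥ γs, ∀ z1 z2 ν δ : ℝ,
      (z1, z2, ν, δ) ≠ ((0:ℝ), (0:ℝ), (0:ℝ), (0:ℝ)) →
      Jhat d β α1 α2 a L γ z1 z2 ν δ < 0 := by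
  obtain ⟨hd1, hd2⟩ := hd
  have h1d : (0:ℝ) < 1 - d := by linarith
  have h1pd : (0:ℝ) < 1 + d := by linarith
  have hp1 : (0:ℝ) < 1/(1-d) := by positivity
  have hp2 : (0:ℝ) < (1+d)/(1-d) := by positivity
  have hp3 : (0:ℝ) < 2/(1-d) := by positivity
  have hp4 : (0:ℝ) < 2/(1+d) := by positivity
  -- the homogeneous "norm", the γ-free part f, and the supply coefficient g
  set N : ℝ×ℝ×ℝ×ℝ → ℝ :=
    fun x => |x.1| ^ (2/(1-d)) + x.2.1^2 + |x.2.2.1| ^ (2/(1-d)) + |x.2.2.2| ^ (2/(1+d))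
    with hNdef
  set f : ℝ×ℝ×ℝ×ℝ → ℝ := fun x => Jhat d β α1 α2 a L 0 x.1 x.2.1 x.2.2.1 x.2.2.2 with hfdef
  set g : ℝ×ℝ×ℝ×ℝ → ℝ := fun x => |x.2.2.1| ^ (2/(1-d)) + |x.2.2.2| ^ (2/(1+d)) with hgdef
  have hgnn : ∀ x, 0 ≤ g x := fun x =>
    add_nonneg (Real.rpow_nonneg (abs_nonneg _) _) (Real.rpow_nonneg (abs_nonneg _) _)
  -- projections
  have P1 : Continuous fun x : ℝ×ℝ×ℝ×ℝ => x.1 := continuous_fst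
  have P2 : Continuous fun x : ℝ×ℝ×ℝ×ℝ => x.2.1 := continuous_fst.comp continuous_snd
  have P3 : Continuous fun x : ℝ×ℝ×ℝ×ℝ => x.2.2.1 :=
    continuous_fst.comp (continuous_snd.comp continuous_snd)
  have P4 : Continuous fun x : ℝ×ℝ×ℝ×ℝ => x.2.2.2 :=
    continuous_snd.comp (continuous_snd.comp continuous_snd)
  have hcontg : Continuous g :=
    (((continuous_abs_rpow hp3).comp P3).add ((continuous_abs_rpow hp4).comp P4))
  have hcontN : Continuous N := by
    exact ((((continuous_abs_rpow hp3).comp P1).add (P2.pow 2)).add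
      ((continuous_abs_rpow hp3).comp P3)).add ((continuous_abs_rpow hp4).comp P4)
  have hcontf : Continuous f := by
    have s1 : Continuous fun x : ℝ×ℝ×ℝ×ℝ => spow x.1 (1/(1-d)) :=
      (continuous_spow hp1).comp P1
    have s1' : Continuous fun x : ℝ×ℝ×ℝ×ℝ => spow (x.1 + x.2.2.1) (1/(1-d)) :=
      (continuous_spow hp1).comp (P1.add P3)
    have sq' : Continuous fun x : ℝ×ℝ×ℝ×ℝ => spow (x.1 + x.2.2.1) ((1+d)/(1-d)) :=
      (continuous_spow hp2).comp (P1.add P3)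
    have s2 : Continuous fun x : ℝ×ℝ×ℝ×ℝ => spow x.2.1 (1-d) :=
      (continuous_spow h1d).comp P2
    have hq3 : (0:ℝ) ≤ 2/(1-d) := hp3.le
    have hq4 : (0:ℝ) ≤ 2/(1+d) := hp4.le
    rw [hfdef]
    unfold Jhat
    simp only [zero_div, zero_pow, zero_mul, sub_zero, OfNat.ofNat_ne_zero,
      ne_eq, not_false_eq_true]
    fun_prop
  -- the homogeneous sphere S
  set S : Set (ℝ×ℝ×ℝ×ℝ) := {x | N x = 1} with hSdef
  have hScomp : IsCompact S := by
    have hclosed : IsClosed S := isClosed_eq hcontN continuous_const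
    have hsub : S ⊆ (Set.Icc (-1:ℝ) 1) ×ˢ ((Set.Icc (-1:ℝ) 1) ×ˢ
        ((Set.Icc (-1:ℝ) 1) ×ˢ (Set.Icc (-1:ℝ) 1))) := by
      intro x hx
      have hx1 : (0:ℝ) ≤ |x.1| ^ (2/(1-d)) := Real.rpow_nonneg (abs_nonneg _) _
      have hx2 : (0:ℝ) ≤ x.2.1^2 := sq_nonneg _
      have hx3 : (0:ℝ) ≤ |x.2.2.1| ^ (2/(1-d)) := Real.rpow_nonneg (abs_nonneg _) _
      have hx4 : (0:ℝ) ≤ |x.2.2.2| ^ (2/(1+d)) := Real.rpow_nonneg (abs_nonneg _) _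
      have hxN : N x = 1 := hx
      rw [hNdef] at hxN
      have b1 : |x.1| ≤ 1 := abs_le_one_of_rpow_le_one hp3 (by nlinarith)
      have b2 : |x.2.1| ≤ 1 := by nlinarith [sq_abs x.2.1, abs_nonneg x.2.1]
      have b3 : |x.2.2.1| ≤ 1 := abs_le_one_of_rpow_le_one hp3 (by nlinarith)
      have b4 : |x.2.2.2| ≤ 1 := abs_le_one_of_rpow_le_one hp4 (by nlinarith)
      rw [abs_le] at b1 b2 b3 b4
      exact ⟨Set.mem_Icc.2 b1, Set.mem_Icc.2 b2, Set.mem_Icc.2 b3, Set.mem_Icc.2 b4⟩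
    exact (isCompact_Icc.prod (isCompact_Icc.prod
      (isCompact_Icc.prod isCompact_Icc))).of_isClosed_subset hclosed hsub
  -- on S, if g vanishes then f is negative
  have hneg : ∀ x ∈ S, g x = 0 → f x < 0 := by
    intro x hx hgx
    have h3 : |x.2.2.1| ^ (2/(1-d)) = 0 ∧ |x.2.2.2| ^ (2/(1+d)) = 0 := by
      constructor <;> nlinarith [Real.rpow_nonneg (abs_nonneg x.2.2.1) (2/(1-d)),
        Real.rpow_nonneg (abs_nonneg x.2.2.2) (2/(1+d)),
        show |x.2.2.1| ^ (2/(1-d)) + |x.2.2.2| ^ (2/(1+d)) = 0 from hgx]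
    have hv : x.2.2.1 = 0 := by
      have := h3.1
      rw [Real.rpow_eq_zero (abs_nonneg _) hp3.ne'] at this
      exact abs_eq_zero.1 this
    have hδ : x.2.2.2 = 0 := by
      have := h3.2
      rw [Real.rpow_eq_zero (abs_nonneg _) hp4.ne'] at this
      exact abs_eq_zero.1 this
    have hz12 : (x.1, x.2.1) ≠ ((0:ℝ), (0:ℝ)) := by
      intro hcon
      have hx1 : x.1 = 0 := congrArg Prod.fst hcon
      have hx2 : x.2.1 = 0 := congrArg Prod.snd hcon
      have hxN : N x = 1 := hx
      rw [hNdef] at hxN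
      simp [hx1, hx2, hv, hδ, Real.zero_rpow hp3.ne', Real.zero_rpow hp4.ne'] at hxN
    have := hSF x.1 x.2.1 hz12
    rw [hfdef]
    simp only
    rw [hv, hδ, Jhat_zero d β α1 α2 a L x.1 x.2.1 hd1 hd2]
    linarith
  -- uniform bound on f over S
  obtain ⟨M, hM⟩ := hScomp.exists_bound_of_continuousOn hcontf.continuousOn
  -- produce a constant c with f - c g < 0 on S
  have hkey : ∃ c : ℝ, 0 ≤ c ∧ ∀ x ∈ S, f x - c * g x < 0 := by
    set T : Set (ℝ×ℝ×ℝ×ℝ) := S ∩ {x | 0 ≤ f x} with hTdef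
    have hTcomp : IsCompact T :=
      hScomp.inter_right (isClosed_le continuous_const hcontf)
    rcases T.eq_empty_or_nonempty with hTe | hTne
    · refine ⟨0, le_refl 0, fun x hx => ?_⟩
      have hxT : x ∉ T := by rw [hTe]; exact Set.notMem_empty x
      have : ¬ (0 ≤ f x) := fun hcon => hxT ⟨hx, hcon⟩
      push_neg at this
      simpa using this
    · obtain ⟨x0, hx0T, hx0min⟩ := hTcomp.exists_isMinOn hTne hcontg.continuousOn
      have hε : 0 < g x0 := by
        rcases lt_or_eq_of_le (hgnn x0) with h|h
        · exact h
        · exfalso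
          have := hneg x0 hx0T.1 h.symm
          have hfx0 : 0 ≤ f x0 := hx0T.2
          linarith
      refine ⟨(|M|+1)/(g x0), by positivity, fun x hx => ?_⟩
      rcases lt_or_ge (f x) 0 with hfx | hfx
      · have h1 : 0 ≤ (|M|+1)/(g x0) * g x := by positivity
        linarith
      · have hxT : x ∈ T := ⟨hx, hfx⟩
        have h1 : g x0 ≤ g x := (isMinOn_iff.1 hx0min) x hxT
        have h2 : f x ≤ |M| := by
          have := hM x hx
          calc f x ≤ ‖f x‖ := le_abs_self _
            _ ≤ M := this
            _ ≤ |M| := le_abs_self _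
        have h3 : (|M|+1)/(g x0) * g x0 = |M|+1 := by field_simp
        have h4 : (|M|+1)/(g x0) * g x0 ≤ (|M|+1)/(g x0) * g x :=
          mul_le_mul_of_nonneg_left h1 (by positivity)
        linarith
  obtain ⟨c, hc0, hcS⟩ := hkey
  refine ⟨L * Real.sqrt c, by positivity, ?_⟩
  intro γ hγ z1 z2 ν δ hne
  have hγ0 : 0 ≤ γ := le_trans (by positivity) hγ
  have hγc : c ≤ (γ/L)^2 := by
    have h1 : Real.sqrt c ≤ γ / L := by
      rw [le_div_iff₀ hL]
      calc Real.sqrt c * L = L * Real.sqrt c := by ring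
        _ ≤ γ := hγ
    calc c = (Real.sqrt c)^2 := (Real.sq_sqrt hc0).symm
      _ ≤ (γ/L)^2 := by nlinarith [Real.sqrt_nonneg c]
  -- scale the point onto S
  have hne4 : z1 ≠ 0 ∨ z2 ≠ 0 ∨ ν ≠ 0 ∨ δ ≠ 0 := by
    by_contra h
    push_neg at h
    exact hne (by simp [h.1, h.2.1, h.2.2.1, h.2.2.2])
  have hm : 0 < N (z1, z2, ν, δ) := by
    have t1 : (0:ℝ) ≤ |z1| ^ (2/(1-d)) := Real.rpow_nonneg (abs_nonneg _) _
    have t2 : (0:ℝ) ≤ z2^2 := sq_nonneg _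
    have t3 : (0:ℝ) ≤ |ν| ^ (2/(1-d)) := Real.rpow_nonneg (abs_nonneg _) _
    have t4 : (0:ℝ) ≤ |δ| ^ (2/(1+d)) := Real.rpow_nonneg (abs_nonneg _) _
    rw [hNdef]
    simp only
    rcases hne4 with h|h|h|h
    · have : (0:ℝ) < |z1| ^ (2/(1-d)) := Real.rpow_pos_of_pos (abs_pos.2 h) _
      nlinarith
    · have : (0:ℝ) < z2^2 := by positivity
      nlinarith
    · have : (0:ℝ) < |ν| ^ (2/(1-d)) := Real.rpow_pos_of_pos (abs_pos.2 h) _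
      nlinarith
    · have : (0:ℝ) < |δ| ^ (2/(1+d)) := Real.rpow_pos_of_pos (abs_pos.2 h) _
      nlinarith
  set m := N (z1, z2, ν, δ) with hmdef
  set c0 : ℝ := m ^ ((1:ℝ)/2) with hc0def
  have hc0pos : 0 < c0 := Real.rpow_pos_of_pos hm _
  have hc0sq : c0^2 = m := by
    rw [hc0def, ← rpow_two_eq (Real.rpow_pos_of_pos hm _).le, ← Real.rpow_mul hm.le]
    norm_num
  -- scaled point
  have hr1 : (0:ℝ) < c0^(1-d) := Real.rpow_pos_of_pos hc0pos _
  have hr2 : (0:ℝ) < c0^(1+d) := Real.rpow_pos_of_pos hc0pos _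
  set y1 : ℝ := (c0^(1-d))⁻¹ * z1 with hy1
  set y2 : ℝ := c0⁻¹ * z2 with hy2
  set y3 : ℝ := (c0^(1-d))⁻¹ * ν with hy3
  set y4 : ℝ := (c0^(1+d))⁻¹ * δ with hy4
  have hz1 : z1 = c0^(1-d) * y1 := by
    rw [hy1, ← mul_assoc, mul_inv_cancel₀ hr1.ne', one_mul]
  have hz2 : z2 = c0 * y2 := by
    rw [hy2, ← mul_assoc, mul_inv_cancel₀ hc0pos.ne', one_mul]
  have hz3 : ν = c0^(1-d) * y3 := by
    rw [hy3, ← mul_assoc, mul_inv_cancel₀ hr1.ne', one_mul]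
  have hz4 : δ = c0^(1+d) * y4 := by
    rw [hy4, ← mul_assoc, mul_inv_cancel₀ hr2.ne', one_mul]
  have e3 : (1-d) * (2/(1-d)) = 2 := by field_simp
  have e4 : (1+d) * (2/(1+d)) = 2 := by field_simp
  have hNhom : N (c0^(1-d)*y1, c0*y2, c0^(1-d)*y3, c0^(1+d)*y4) = c0^2 * N (y1,y2,y3,y4) := by
    rw [hNdef]
    simp only
    rw [abs_rpow_scale hc0pos, abs_rpow_scale hc0pos, abs_rpow_scale hc0pos, e3, e4,
      mul_pow, rpow_two_eq hc0pos.le]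
    ring
  have hNy : N (y1,y2,y3,y4) = 1 := by
    have h0 : N (z1, z2, ν, δ) = c0^2 * N (y1,y2,y3,y4) := by
      rw [hz1, hz2, hz3, hz4] at hmdef ⊢
      exact hNhom
    rw [← hmdef, hc0sq] at h0
    have : m * 1 = m * N (y1,y2,y3,y4) := by rw [mul_one]; exact h0
    exact (mul_left_cancel₀ hm.ne' this).symm
  have hyS : (y1,y2,y3,y4) ∈ S := hNy
  -- conclude
  have hJy : Jhat d β α1 α2 a L γ y1 y2 y3 y4 < 0 := by
    have h1 := hcS (y1,y2,y3,y4) hyS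
    have h2 : Jhat d β α1 α2 a L γ y1 y2 y3 y4
        = f (y1,y2,y3,y4) - (γ/L)^2 * g (y1,y2,y3,y4) := by
      rw [hfdef, hgdef]
      simp only
      exact Jhat_split d β α1 α2 a L γ y1 y2 y3 y4
    have h3 : c * g (y1,y2,y3,y4) ≤ (γ/L)^2 * g (y1,y2,y3,y4) :=
      mul_le_mul_of_nonneg_right hγc (hgnn _)
    rw [h2]
    have h4 : f (y1,y2,y3,y4) - (γ/L)^2 * g (y1,y2,y3,y4)
        ≤ f (y1,y2,y3,y4) - c * g (y1,y2,y3,y4) := by linarith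
    exact lt_of_le_of_lt h4 h1
  calc Jhat d β α1 α2 a L γ z1 z2 ν δ
      = Jhat d β α1 α2 a L γ (c0^(1-d)*y1) (c0*y2) (c0^(1-d)*y3) (c0^(1+d)*y4) := by
        rw [← hz1, ← hz2, ← hz3, ← hz4]
    _ = c0^2 * Jhat d β α1 α2 a L γ y1 y2 y3 y4 := Jhat_homog d β α1 α2 a L γ hd1 hd2 hc0pos _ _ _ _
    _ < 0 := mul_neg_of_pos_of_neg (by positivity) hJy
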